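/- arXiv:1410.1460 — 6 statements merged into one kernel-verified Lean document; each statement's English description precedes it below -/
import Mathlib

section
/- (Theorem 3.1, detailed balance) π satisfies the detailed balance equations for the rates R: for all j, k, l, j' ∈ Λ and all n : Λ → ℕ, (i) π(j,n)·λ e^{φ δ_{jk}} = π(j, n+e^k)·μ for every k ∈ Λ; (ii) if k ≠ j, l ≠ j, k ≠ l and n_k ≥ 1, then π(j,n)·β_{kl} = π(j, n+e^{k→l})·β_{lk}; (iii) if k ≠ j and n_j ≥ 1, then π(j,n)·θ_{jk} = π(j, n+e^{j→k})·θ_{kj} e^{φ}; (iv) if k ≠ j and n_k ≥ 1, then π(j,n)·θ_{kj} e^{φ} = π(j, n+e^{k→j})·θ_{jk}; (v) if j' ≠ j, then π(j,n)·e^{−φ n_j} τ_{jj'} = π(j',n)·e^{−φ n_{j'}} τ_{j'j}. -/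
/-- The `e^k` configuration increment: `n + e^k`. -/
def bump {Λ : Type*} [DecidableEq Λ] (n : Λ → ℕ) (k : Λ) : Λ → ℕ :=
  fun l => n l + (if l = k then 1 else 0)

/-- The jump move `n + e^{i→k} = n - e^i + e^k`. -/
def move {Λ : Type*} [DecidableEq Λ] (n : Λ → ℕ) (i k : Λ) : Λ → ℕ :=
  fun l => n l - (if l = i then 1 else 0) + (if l = k then 1 else 0)

lemma sum_bump {Λ : Type*} [Fintype Λ] [DecidableEq Λ] (n : Λ → ℕ) (k : Λ) :
    ∑ i, bump n k i = (∑ i, n i) + 1 := by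
  simp [bump, Finset.sum_add_distrib]

lemma sum_move {Λ : Type*} [Fintype Λ] [DecidableEq Λ] (n : Λ → ℕ) (i k : Λ)
    (h : 1 ≤ n i) : ∑ l, move n i k l = ∑ l, n l := by
  unfold move
  rw [Finset.sum_add_distrib]
  have h1 : (∑ l : Λ, (if l = k then 1 else 0)) = 1 := by simp
  rw [h1]
  have : (∑ l : Λ, (n l - if l = i then 1 else 0)) + 1
      = ∑ l : Λ, ((n l - if l = i then 1 else 0) + if l = i then 1 else 0) := by
    rw [Finset.sum_add_distrib]; simp
  rw [this]
  apply Finset.sum_congr rfl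
  intro l _
  by_cases hl : l = i
  · subst hl; simp; omega
  · simp [hl]

/-- Theorem 3.1, detailed balance: the stationary probabilities
`π(j,n)` of the random walk in a Jackson environment satisfy the detailed
balance equations for the rates `R`. -/
theorem rw_jackson_detailed_balance
    (Λ : Type*) [Fintype Λ] [DecidableEq Λ] [Nonempty Λ]
    (lam mu φ : ℝ) (hlam : 0 < lam) (hmu : 0 < mu)
    (β θ τ : Λ → Λ → ℝ)
    (hβsym : ∀ i k, β i k = β k i) (hβnn : ∀ i k, 0 ≤ β i k) (hβd : ∀ i, β i i = 0)
    (hθsym : ∀ i k, θ i k = θ k i) (hθnn : ∀ i k, 0 ≤ θ i k) (hθd : ∀ i, θ i i = 0)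
    (hτsym : ∀ i k, τ i k = τ k i) (hτnn : ∀ i k, 0 ≤ τ i k) (hτd : ∀ i, τ i i = 0)
    (π : Λ → (Λ → ℕ) → ℝ)
    (hπ : ∀ (j : Λ) (n : Λ → ℕ), π j n =
      (Fintype.card Λ : ℝ)⁻¹ * (1 - lam * Real.exp φ / mu) *
        (1 - lam / mu) ^ (Fintype.card Λ - 1) *
        (lam / mu) ^ (∑ i, n i) * Real.exp (φ * n j)) :
    ∀ (j : Λ) (n : Λ → ℕ),
      -- (i) arrival at k paired with exit from k
      (∀ k, π j n * (lam * Real.exp (φ * (if j = k then 1 else 0))) =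
          π j (bump n k) * mu) ∧
      -- (ii) task jump between two unloaded sites
      (∀ k l, k ≠ j → l ≠ j → k ≠ l → 1 ≤ n k →
        π j n * β k l = π j (move n k l) * β l k) ∧
      -- (iii) task jump from the loaded site
      (∀ k, k ≠ j → 1 ≤ n j →
        π j n * θ j k = π j (move n j k) * (θ k j * Real.exp φ)) ∧
      -- (iv) task jump to the loaded site
      (∀ k, k ≠ j → 1 ≤ n k →
        π j n * (θ k j * Real.exp φ) = π j (move n k j) * θ j k) ∧
      -- (v) leap of the distinguished customer
      (∀ j', j' ≠ j →
        π j n * (Real.exp (-(φ * n j)) * τ j j') =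
          π j' n * (Real.exp (-(φ * n j')) * τ j' j)) := by
  intro j n
  have hmu' : (mu : ℝ) ≠ 0 := ne_of_gt hmu
  refine ⟨?_, ?_, ?_, ?_, ?_⟩
  · -- (i)
    intro k
    rw [hπ, hπ, sum_bump]
    have hb : bump n k j = n j + (if j = k then 1 else 0) := rfl
    rw [hb, pow_succ]
    push_cast
    rw [mul_add, Real.exp_add]
    field_simp
  · -- (ii)
    intro k l hk hl hkl hnk
    rw [hπ, hπ, sum_move n k l hnk]
    have hm : move n k l j = n j := by
      simp [move, Ne.symm hk, Ne.symm hl]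
    rw [hm, hβsym k l]
  · -- (iii)
    intro k hk hnj
    rw [hπ, hπ, sum_move n j k hnj]
    have hm : move n j k j = n j - 1 := by
      simp [move, Ne.symm hk]
    rw [hm, hθsym j k]
    have : ((n j - 1 : ℕ) : ℝ) = (n j : ℝ) - 1 := by
      push_cast [hnj]; ring
    rw [this]
    have hexp : Real.exp (φ * ((n j : ℝ) - 1)) = Real.exp (φ * n j) / Real.exp φ := by
      rw [mul_sub, mul_one, Real.exp_sub]
    rw [hexp]
    field_simp
  · -- (iv)
    intro k hk hnk
    rw [hπ, hπ, sum_move n k j hnk]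
    have hm : move n k j j = n j + 1 := by
      simp [move, Ne.symm hk]
    rw [hm, hθsym j k]
    push_cast
    rw [mul_add, Real.exp_add]
    ring
  · -- (v)
    intro j' hj'
    rw [hπ, hπ, hτsym j j']
    rw [Real.exp_neg, Real.exp_neg]
    have h1 : Real.exp (φ * n j) ≠ 0 := Real.exp_ne_zero _
    have h2 : Real.exp (φ * n j') ≠ 0 := Real.exp_ne_zero _
    field_simp
end

section
/- (Theorem 3.1, normalization) If λ/μ < 1 and λe^{φ}/μ < 1, then the family (π(j,n)) indexed by j ∈ Λ and n : Λ → ℕ is summable and Σ_{j∈Λ} Σ_{n : Λ → ℕ} π(j,n) = 1; that is, π is a probability distribution on Λ × ℕ^Λ. -/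
/-! For a fixed loaded site `j`, the weight factorises over the sites:
`π(j, n)` is a constant times `∏ i, ρ i ^ n i` with `ρ j = λe^φ/μ` and `ρ i = λ/μ` for `i ≠ j`.
Summing the finitely many geometric series gives the fibre sum
`(1 - λe^φ/μ)⁻¹ (1 - λ/μ)⁻¹ ^ (#Λ - 1)`, which the constant cancels down to `(#Λ)⁻¹`;
the `#Λ` choices of `j` then add up to `1`. -/

open Finset

universe u

theorem hasSum_pi_prod_of_nonneg {ι : Type u} {β : Type*} [Fintype ι] {g : ι → β → ℝ}
    {s : ι → ℝ} (hg : ∀ i, 0 ≤ g i) (hs : ∀ i, HasSum (g i) (s i)) :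
    HasSum (fun n : ι → β => ∏ i, g i (n i)) (∏ i, s i) := by
  -- The induction has to generalise over the `Fintype` instance as well.
  suffices key : ∀ (κ : Type u) [Finite κ] [Fintype κ] (g : κ → β → ℝ) (s : κ → ℝ),
      (∀ i, 0 ≤ g i) → (∀ i, HasSum (g i) (s i)) →
        HasSum (fun n : κ → β => ∏ i, g i (n i)) (∏ i, s i) from key ι g s hg hs
  intro κ _
  induction κ using Finite.induction_empty_option with
  | @of_equiv κ κ' e ih =>
    intro _ g s hg hs
    let _ : Fintype κ := Fintype.ofEquiv κ' e.symm
    specialize ih _ _ (fun i => hg (e i)) (fun i => hs (e i))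
    rw [← (Equiv.arrowCongr e (Equiv.refl β)).hasSum_iff, ← e.prod_comp]
    convert ih using 2 with n
    simp only [Function.comp_apply, Equiv.arrowCongr_apply, Equiv.coe_refl]
    rw [← e.prod_comp]
    simp
  | h_empty =>
    intro _ g s _ _
    simp
  | @h_option κ _ ih =>
    intro inst g s hg hs
    obtain rfl : inst = instFintypeOption := Subsingleton.elim _ _
    specialize ih _ _ (fun i => hg (some i)) (fun i => hs (some i))
    have hmul := (hs none).mul ih <|
      (hs none).summable.mul_of_nonneg ih.summable (hg none)
        fun _ => prod_nonneg fun i _ => hg (some i) _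
    have hsplit : (fun n : Option κ → β => ∏ i, g i (n i)) ∘ Equiv.piOptionEquivProd.symm =
        fun x => g none x.1 * ∏ i, g (some i) (x.2 i) := by
      ext n
      simp [Fintype.prod_option]
    rw [← Equiv.piOptionEquivProd.symm.hasSum_iff, hsplit, Fintype.prod_option]
    exact hmul

theorem hasSum_prod_of_fintype_left {α β M : Type*} [Fintype α] [AddCommMonoid M]
    [TopologicalSpace M] [ContinuousAdd M] {f : α × β → M} {g : α → M}
    (h : ∀ a, HasSum (fun b => f (a, b)) (g a)) :
    HasSum f (∑ a, g a) := by
  classical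
  have hfiber (a : α) : HasSum (fun p : α × β => if p.1 = a then f p else 0) (g a) := by
    refine (Prod.mk_right_injective a).hasSum_iff ?_ |>.mp ?_
    · rintro ⟨a', b⟩ hp
      rw [if_neg]
      rintro rfl
      exact hp ⟨b, rfl⟩
    · simpa [Function.comp_def] using h a
  simpa using hasSum_sum (s := univ) fun a _ => hfiber a

theorem hasSum_prod_pow_of_lt_one {ι : Type*} [Fintype ι] {r : ι → ℝ} (h0 : ∀ i, 0 ≤ r i)
    (h1 : ∀ i, r i < 1) :
    HasSum (fun n : ι → ℕ => ∏ i, r i ^ n i) (∏ i, (1 - r i)⁻¹) :=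
  hasSum_pi_prod_of_nonneg (fun i k => pow_nonneg (h0 i) k)
    fun i => hasSum_geometric_of_lt_one (h0 i) (h1 i)

theorem Fintype.prod_ite_eq_mul_pow {ι M : Type*} [Fintype ι] [DecidableEq ι] [CommMonoid M]
    (j : ι) (a b : M) :
    ∏ i, (if i = j then a else b) = a * b ^ (Fintype.card ι - 1) := by
  rw [Fintype.prod_eq_mul_prod_compl j, if_pos rfl,
    Finset.prod_congr rfl fun i hi => if_neg (by simpa using hi), Finset.prod_const,
    Finset.card_compl, Finset.card_singleton]

theorem Fintype.prod_ite_mul_pow {ι M : Type*} [Fintype ι] [DecidableEq ι] [CommMonoid M]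
    (j : ι) (n : ι → ℕ) (r x : M) :
    ∏ i, (if i = j then r * x else r) ^ n i = r ^ (∑ i, n i) * x ^ n j := by
  simp_rw [← Finset.prod_pow_eq_pow_sum, ← Fintype.prod_ite_eq' j fun i => x ^ n i,
    ← Finset.prod_mul_distrib]
  refine Finset.prod_congr rfl fun i _ => ?_
  split_ifs <;> simp [mul_pow]

theorem hasSum_pow_sum_mul_pow {ι : Type*} [Fintype ι] [DecidableEq ι] (j : ι) {r x : ℝ}
    (hr0 : 0 ≤ r) (hr1 : r < 1) (hx0 : 0 ≤ x) (hrx : r * x < 1) :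
    HasSum (fun n : ι → ℕ => r ^ (∑ i, n i) * x ^ n j)
      ((1 - r * x)⁻¹ * (1 - r)⁻¹ ^ (Fintype.card ι - 1)) := by
  have h := hasSum_prod_pow_of_lt_one (r := fun i => if i = j then r * x else r)
    (fun i => by split_ifs <;> positivity) (fun i => by split_ifs <;> assumption)
  simpa only [Fintype.prod_ite_mul_pow, apply_ite (fun t : ℝ => (1 - t)⁻¹),
    Fintype.prod_ite_eq_mul_pow] using h

theorem hasSum_normalized_pow_sum_mul_pow {ι : Type*} [Fintype ι] [DecidableEq ι] (j : ι)
    {r x : ℝ} (hr0 : 0 ≤ r) (hr1 : r < 1) (hx0 : 0 ≤ x) (hrx : r * x < 1) :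
    HasSum (fun n : ι → ℕ =>
      (1 - r * x) * (1 - r) ^ (Fintype.card ι - 1) * (r ^ (∑ i, n i) * x ^ n j)) 1 := by
  have h := (hasSum_pow_sum_mul_pow j hr0 hr1 hx0 hrx).mul_left
    ((1 - r * x) * (1 - r) ^ (Fintype.card ι - 1))
  have hrx' : 1 - r * x ≠ 0 := by linarith
  have hr' : 1 - r ≠ 0 := by linarith
  rwa [inv_pow, mul_mul_mul_comm, mul_inv_cancel₀ hrx', one_mul,
    mul_inv_cancel₀ (pow_ne_zero _ hr')] at h

/-- Theorem 3.1, normalization: under the sub-criticality conditions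
`λ/μ < 1` and `λ e^φ/μ < 1`, the stationary probabilities `π(j,n)` form a
probability distribution on `Λ × ℕ^Λ`. -/
theorem rw_jackson_normalized
    (Λ : Type*) [Fintype Λ] [Nonempty Λ]
    (lam mu φ : ℝ) (hlam : 0 < lam) (hmu : 0 < mu)
    (hsub1 : lam / mu < 1) (hsub2 : lam * Real.exp φ / mu < 1)
    (π : Λ → (Λ → ℕ) → ℝ)
    (hπ : ∀ (j : Λ) (n : Λ → ℕ), π j n =
      (Fintype.card Λ : ℝ)⁻¹ * (1 - lam * Real.exp φ / mu) *
        (1 - lam / mu) ^ (Fintype.card Λ - 1) *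
        (lam / mu) ^ (∑ i, n i) * Real.exp (φ * n j)) :
    Summable (fun p : Λ × (Λ → ℕ) => π p.1 p.2) ∧
      ∑' p : Λ × (Λ → ℕ), π p.1 p.2 = 1 := by
  classical
  set r := lam / mu
  have hrx : lam * Real.exp φ / mu = r * Real.exp φ := by ring
  rw [hrx] at hsub2 hπ
  have hfiber (j : Λ) : HasSum (π j) (Fintype.card Λ : ℝ)⁻¹ := by
    have h := (hasSum_normalized_pow_sum_mul_pow j (by positivity) hsub1 (Real.exp_pos φ).le
      hsub2).mul_left (Fintype.card Λ : ℝ)⁻¹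
    rw [mul_one] at h
    have hπj : π j = fun n => (Fintype.card Λ : ℝ)⁻¹ * ((1 - r * Real.exp φ) *
        (1 - r) ^ (Fintype.card Λ - 1) * (r ^ (∑ i, n i) * Real.exp φ ^ n j)) := by
      ext n
      rw [hπ, mul_comm φ, Real.exp_nat_mul]
      ring
    rwa [hπj]
  have htotal := hasSum_prod_of_fintype_left (f := fun p : Λ × (Λ → ℕ) => π p.1 p.2) hfiber
  refine ⟨htotal.summable, htotal.tsum_eq.trans ?_⟩
  simp
end

section
/- (Theorem 3.2, detailed balance) Suppose the arrays satisfy the symmetry conditions: (3.7) λ_i(n_i−1;j)/μ_i(n_i;j) · β_{ik}(n_i,n_k;j) = λ_k(n_k;j)/μ_k(n_k+1;j) · β_{ki}(n_k+1,n_i−1;j) for all i ≠ k, j ∈ Λ and n_i ≥ 1; (3.8) λ_j(n_j−1;j)/μ_j(n_j;j) · θ_{jk}(n_j,n_k) = λ_k(n_k;j)/μ_k(n_k+1;j) · θ_{kj}(n_k+1,n_j−1) for all k ≠ j and n_j ≥ 1; (3.9) τ_{ik}(n) · ∏_{q∈Λ} λ̄_q(n_q;i)/μ̄_q(n_q;i)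 = τ_{ki}(n) · ∏_{q∈Λ} λ̄_q(n_q;k)/μ̄_q(n_q;k) for all i ≠ k and all n : Λ → ℕ. Then the weight w(j,n) = ∏_{q∈Λ} [λ̄_q(n_q;j)/μ̄_q(n_q;j)] · γ̄_j(n_j) satisfies the detailed balance equations: for all j ∈ Λ and n : Λ → ℕ, (i) w(j,n)·λ_k(n_k;j) = w(j, n+e^k)·μ_k(n_k+1;j) for all k ≠ j, and w(j,n)·λ_j(n_j;j)γ_j(n_j) = w(j, n+e^j)·μ_j(n_j+1;j); (ii) w(j,n)·β_{kl}(n_k,n_l;j) = w(j, n+e^{k→l})·β_{lk}(n_l+1,n_k−1;j) for k ≠ j, l ≠ j, k ≠ l, n_k ≥ 1; (iii) w(j,n)·θ_{jk}(n_j,n_k) = w(j, n+e^{j→k})·θ_{kj}(n_k+1,n_j−1)·γ_j(n_j−1) for k ≠ j, n_j ≥ 1; (iv) w(j,n)·γ̄_j(n_j)^{−1}·τ_{jj'}(n) = w(j',n)·γ̄_{j'}(n_{j'})^{−1}·τ_{j'j}(n) for j' ≠ j. -/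
open Finset Function

section Configurations

variable {Λ : Type*} [DecidableEq Λ]

theorem bump_eq_update (n : Λ → ℕ) (k : Λ) : bump n k = update n k (n k + 1) := by
  ext l
  by_cases hl : l = k
  · subst hl; simp [bump]
  · simp [bump, hl]

theorem move_eq_update_update (n : Λ → ℕ) {k l : Λ} (hkl : k ≠ l) :
    move n k l = update (update n k (n k - 1)) l (n l + 1) := by
  ext q
  by_cases hql : q = l
  · subst hql; simp [move, Ne.symm hkl]
  · by_cases hqk : q = k
    · subst hqk; simp [move, hql]
    · simp [move, hql, hqk]

section ProductForm

variable [Fintype Λ] {M : Type*} [CommMonoid M] {ρ s : Λ → ℕ → M}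

theorem prod_apply_update_eq_mul (n : Λ → ℕ) (k : Λ) {v : ℕ} {c : M}
    (h : ρ k v = ρ k (n k) * c) :
    ∏ q, ρ q (update n k v q) = (∏ q, ρ q (n q)) * c := by
  simp only [apply_update (fun q => ρ q)]
  rw [prod_update_of_mem (mem_univ k), h, prod_eq_mul_prod_sdiff_singleton_of_mem (mem_univ k)]
  ac_rfl

variable (hρ : ∀ q m, ρ q (m + 1) = ρ q m * s q m)
include hρ

theorem prod_bump_eq_mul (n : Λ → ℕ) (k : Λ) :
    ∏ q, ρ q (bump n k q) = (∏ q, ρ q (n q)) * s k (n k) := by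
  rw [bump_eq_update]
  exact prod_apply_update_eq_mul n k (hρ k (n k))

theorem exists_prod_eq_and_prod_move_eq {n : Λ → ℕ} {k l : Λ} (hkl : k ≠ l) (hk : 1 ≤ n k) :
    ∃ c, ∏ q, ρ q (n q) = c * s k (n k - 1) ∧ ∏ q, ρ q (move n k l q) = c * s l (n l) := by
  set n₀ := update n k (n k - 1)
  have hn₀l : n₀ l = n l := update_of_ne hkl.symm _ _
  refine ⟨∏ q, ρ q (n₀ q), ?_, ?_⟩
  · have hn : n = update n₀ k (n k) := by simp [n₀]
    conv_lhs => rw [hn]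
    refine prod_apply_update_eq_mul n₀ k ?_
    rw [show n₀ k = n k - 1 from update_self .., ← hρ, Nat.sub_add_cancel hk]
  · rw [move_eq_update_update n hkl, ← hn₀l]
    exact prod_apply_update_eq_mul n₀ l (hρ l (n₀ l))

end ProductForm

end Configurations

theorem general_rw_jackson_detailed_balance_general
    (Λ : Type*) [Fintype Λ] [DecidableEq Λ]
    (lam mu : Λ → ℕ → Λ → ℝ) (gam : Λ → ℕ → ℝ)
    (hmu : ∀ i m j, 0 < mu i m j)
    (hgam : ∀ i m, 0 < gam i m)
    (lamBar muBar : Λ → ℕ → Λ → ℝ) (gamBar : Λ → ℕ → ℝ)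
    (hlamBar : ∀ i m j, lamBar i m j = ∏ u ∈ Finset.range m, lam i u j)
    (hmuBar : ∀ i m j, muBar i m j = ∏ u ∈ Finset.range m, mu i (u + 1) j)
    (hgamBar : ∀ i m, gamBar i m = ∏ u ∈ Finset.range m, gam i u)
    (β : Λ → Λ → ℕ → ℕ → Λ → ℝ) (θ : Λ → Λ → ℕ → ℕ → ℝ) (τ : Λ → Λ → (Λ → ℕ) → ℝ)
    -- symmetry condition (3.7)
    (h37 : ∀ (i k j : Λ) (a b : ℕ), i ≠ k → 1 ≤ a →
      lam i (a - 1) j / mu i a j * β i k a b j =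
        lam k b j / mu k (b + 1) j * β k i (b + 1) (a - 1) j)
    -- symmetry condition (3.8)
    (h38 : ∀ (j k : Λ) (a b : ℕ), k ≠ j → 1 ≤ a →
      lam j (a - 1) j / mu j a j * θ j k a b =
        lam k b j / mu k (b + 1) j * θ k j (b + 1) (a - 1))
    -- symmetry condition (3.9)
    (h39 : ∀ (i k : Λ), i ≠ k → ∀ n : Λ → ℕ,
      τ i k n * ∏ q, lamBar q (n q) i / muBar q (n q) i =
        τ k i n * ∏ q, lamBar q (n q) k / muBar q (n q) k)
    (w : Λ → (Λ → ℕ) → ℝ)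
    (hw : ∀ (j : Λ) (n : Λ → ℕ),
      w j n = (∏ q, lamBar q (n q) j / muBar q (n q) j) * gamBar j (n j)) :
    ∀ (j : Λ) (n : Λ → ℕ),
      -- (i) arrival at an unloaded site paired with exit
      (∀ k, k ≠ j → w j n * lam k (n k) j = w j (bump n k) * mu k (n k + 1) j) ∧
      -- (i') arrival at the loaded site paired with exit
      (w j n * (lam j (n j) j * gam j (n j)) = w j (bump n j) * mu j (n j + 1) j) ∧
      -- (ii) task jump between unloaded sites
      (∀ k l, k ≠ j → l ≠ j → k ≠ l → 1 ≤ n k →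
        w j n * β k l (n k) (n l) j =
          w j (move n k l) * β l k (n l + 1) (n k - 1) j) ∧
      -- (iii) task jump from the loaded site
      (∀ k, k ≠ j → 1 ≤ n j →
        w j n * θ j k (n j) (n k) =
          w j (move n j k) * (θ k j (n k + 1) (n j - 1) * gam j (n j - 1))) ∧
      -- (iv) leap of the distinguished customer
      (∀ j', j' ≠ j →
        w j n * (gamBar j (n j))⁻¹ * τ j j' n =
          w j' n * (gamBar j' (n j'))⁻¹ * τ j' j n) := by
  intro j n
  set ρ : Λ → ℕ → ℝ := fun q m => lamBar q m j / muBar q m j * if q = j then gamBar j m else 1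
  set s : Λ → ℕ → ℝ := fun q m => lam q m j / mu q (m + 1) j * if q = j then gam j m else 1
  have hρ : ∀ q m, ρ q (m + 1) = ρ q m * s q m := by
    intro q m
    simp only [ρ, s, hlamBar, hmuBar, hgamBar, prod_range_succ]
    split_ifs <;> ring
  have hwρ : ∀ n, w j n = ∏ q, ρ q (n q) := by
    intro n
    simp only [ρ, hw, prod_mul_distrib, prod_ite_eq', mem_univ, if_true]
  refine ⟨fun k hkj => ?_, ?_, fun k l hkj hlj hkl hnk => ?_, fun k hkj hnj => ?_, fun j' hj' => ?_⟩
  · rw [hwρ, hwρ, prod_bump_eq_mul hρ]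
    simp only [s, if_neg hkj, mul_one, mul_assoc, div_mul_cancel₀ _ (hmu k (n k + 1) j).ne']
  · rw [hwρ, hwρ, prod_bump_eq_mul hρ]
    simp only [s, ↓reduceIte]
    field_simp [(hmu j (n j + 1) j).ne']
  · obtain ⟨c, hn, hmove⟩ := exists_prod_eq_and_prod_move_eq hρ hkl hnk
    have h := h37 k l j (n k) (n l) hkl hnk
    rw [hwρ, hwρ, hn, hmove]
    simp only [s, if_neg hkj, if_neg hlj, mul_one, Nat.sub_add_cancel hnk] at h ⊢
    linear_combination c * h
  · obtain ⟨c, hn, hmove⟩ := exists_prod_eq_and_prod_move_eq hρ hkj.symm hnj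
    have h := h38 j k (n j) (n k) hkj hnj
    rw [hwρ, hwρ, hn, hmove]
    simp only [s, if_neg hkj, ↓reduceIte, mul_one, Nat.sub_add_cancel hnj] at h ⊢
    linear_combination c * gam j (n j - 1) * h
  · have hP : ∀ i, w i n * (gamBar i (n i))⁻¹ = ∏ q, lamBar q (n q) i / muBar q (n q) i :=
      fun i => by
        rw [hw, hgamBar, mul_inv_cancel_right₀ (prod_ne_zero_iff.2 fun u _ => (hgam i u).ne')]
    rw [hP, hP]
    linear_combination h39 j j' hj'.symm n

/-- Theorem 3.2, detailed balance: under the symmetry conditions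
(3.7)-(3.9), the weights `w(j,n) = ∏_q [λ̄_q(n_q;j)/μ̄_q(n_q;j)] · γ̄_j(n_j)`
satisfy the detailed balance equations. -/
theorem general_rw_jackson_detailed_balance
    (Λ : Type*) [Fintype Λ] [DecidableEq Λ] [Nonempty Λ]
    (lam mu : Λ → ℕ → Λ → ℝ) (gam : Λ → ℕ → ℝ)
    (hlam : ∀ i m j, 0 ≤ lam i m j) (hmu : ∀ i m j, 0 < mu i m j)
    (hgam : ∀ i m, 0 < gam i m) (hgam0 : ∀ i, gam i 0 = 1)
    (lamBar muBar : Λ → ℕ → Λ → ℝ) (gamBar : Λ → ℕ → ℝ)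
    (hlamBar : ∀ i m j, lamBar i m j = ∏ u ∈ Finset.range m, lam i u j)
    (hmuBar : ∀ i m j, muBar i m j = ∏ u ∈ Finset.range m, mu i (u + 1) j)
    (hgamBar : ∀ i m, gamBar i m = ∏ u ∈ Finset.range m, gam i u)
    (β : Λ → Λ → ℕ → ℕ → Λ → ℝ) (θ : Λ → Λ → ℕ → ℕ → ℝ) (τ : Λ → Λ → (Λ → ℕ) → ℝ)
    (hβnn : ∀ i k a b j, 0 ≤ β i k a b j) (hθnn : ∀ i k a b, 0 ≤ θ i k a b)
    (hτnn : ∀ i k n, 0 ≤ τ i k n)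
    -- symmetry condition (3.7)
    (h37 : ∀ (i k j : Λ) (a b : ℕ), i ≠ k → 1 ≤ a →
      lam i (a - 1) j / mu i a j * β i k a b j =
        lam k b j / mu k (b + 1) j * β k i (b + 1) (a - 1) j)
    -- symmetry condition (3.8)
    (h38 : ∀ (j k : Λ) (a b : ℕ), k ≠ j → 1 ≤ a →
      lam j (a - 1) j / mu j a j * θ j k a b =
        lam k b j / mu k (b + 1) j * θ k j (b + 1) (a - 1))
    -- symmetry condition (3.9)
    (h39 : ∀ (i k : Λ), i ≠ k → ∀ n : Λ → ℕ,
      τ i k n * ∏ q, lamBar q (n q) i / muBar q (n q) i =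
        τ k i n * ∏ q, lamBar q (n q) k / muBar q (n q) k)
    (w : Λ → (Λ → ℕ) → ℝ)
    (hw : ∀ (j : Λ) (n : Λ → ℕ),
      w j n = (∏ q, lamBar q (n q) j / muBar q (n q) j) * gamBar j (n j)) :
    ∀ (j : Λ) (n : Λ → ℕ),
      -- (i) arrival at an unloaded site paired with exit
      (∀ k, k ≠ j → w j n * lam k (n k) j = w j (bump n k) * mu k (n k + 1) j) ∧
      -- (i') arrival at the loaded site paired with exit
      (w j n * (lam j (n j) j * gam j (n j)) = w j (bump n j) * mu j (n j + 1) j) ∧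
      -- (ii) task jump between unloaded sites
      (∀ k l, k ≠ j → l ≠ j → k ≠ l → 1 ≤ n k →
        w j n * β k l (n k) (n l) j =
          w j (move n k l) * β l k (n l + 1) (n k - 1) j) ∧
      -- (iii) task jump from the loaded site
      (∀ k, k ≠ j → 1 ≤ n j →
        w j n * θ j k (n j) (n k) =
          w j (move n j k) * (θ k j (n k + 1) (n j - 1) * gam j (n j - 1))) ∧
      -- (iv) leap of the distinguished customer
      (∀ j', j' ≠ j →
        w j n * (gamBar j (n j))⁻¹ * τ j j' n =
          w j' n * (gamBar j' (n j'))⁻¹ * τ j' j n) :=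
  general_rw_jackson_detailed_balance_general Λ lam mu gam hmu hgam lamBar muBar gamBar hlamBar
    hmuBar hgamBar β θ τ h37 h38 h39 w hw
end

section
/- (Theorem 4.2, simple exclusion, open-open network, detailed balance) Suppose: the product V(n) = ∏_{q∈Λ} λ̄_q(n_q;y)/μ̄_q(n_q;y) does not depend on the configuration y : Λ → {0,1} (condition 4.10); condition (4.2a) λ_k(n_k−1;y)/μ_k(n_k;y)·β_{kl}(n_k,n_l;y) = λ_l(n_l;y)/μ_l(n_l+1;y)·β_{lk}(n_l+1,n_k−1;y) for k ≠ l, y_k = y_l = 0, n_k ≥ 1; condition (4.2b) λ_j(n_j−1;y)/μ_j(n_j;y)·θ_{jk}(n_j,n_k;y) = λ_k(n_k;y)/μ_k(n_k+1;y)·θ_{kj}(n_k+1,n_j−1;y) for y_j = 1, y_k = 0, n_j ≥ 1; condition (4.4) λ_i(n_i−1;y)γ_i(n_i−1)/μ_i(n_i;y)·ε_{ij}(n_i,n_j;y) = λ_j(n_j;y)γ_j(n_j)/μ_j(n_j+1;y)·ε_{ji}(n_j+1,n_i−1;y) for i ≠ j, y_i = y_j = 1, n_i ≥ 1; and condition (4.11)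 τ_{jj'}(n;y)·ξ_j/η_j = τ_{j'j}(n;y+e^{j→j'})·ξ_{j'}/η_{j'} for y_j = 1, y_{j'} = 0. Then the weight w(y,n) = V(n) · ∏_{j : y_j = 1} [ξ_j γ̄_j(n_j)/η_j] satisfies the detailed balance equations: (i) w(y,n)·λ_p(n_p;y)·[γ_p(n_p)]^{y_p} = w(y, n+e^p)·μ_p(n_p+1;y) for every p ∈ Λ; (ii) w(y,n)·β_{kl}(n_k,n_l;y) = w(y, n+e^{k→l})·β_{lk}(n_l+1,n_k−1;y) for y_k = y_l = 0, k ≠ l, n_k ≥ 1; (iii) w(y,n)·ε_{ij}(n_i,n_j;y) = w(y, n+e^{i→j})·ε_{ji}(n_j+1,n_i−1;y) for y_i = y_j = 1, i ≠ j, n_i ≥ 1; (iv) w(y,n)·θ_{jk}(n_j,n_k;y) = w(y, n+e^{j→k})·θ_{kj}(n_k+1,n_j−1;y)·γ_j(n_j−1) for y_j = 1, y_k = 0, n_j ≥ 1; (v) w(y,n)·γ̄_j(n_j)^{−1}·τ_{jj'}(n;y) = w(y+e^{j→j'}, n)·γ̄_{j'}(n_{j'})^{−1}·τ_{j'j}(n;y+e^{j→j'})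 for y_j = 1, y_{j'} = 0; (vi) w(y,n)·ξ_k γ̄_k(n_k) = w(y+e^k, n)·η_k whenever y_k = 0 (arrival of a distinguished customer at k paired with its exit). -/
/-!
Every weight ratio is a product of one-site ratios. Moving one task onto site `p` multiplies
`V(n)` by `λ_p(n_p)/μ_p(n_p+1)` and the distinguished factor by `γ_p(n_p)` if `p` is loaded,
which is balance (i). A jump `n → n + e^{k→l}` passes through `m = n - e^k`, from which both
`n = m + e^k` and `n + e^{k→l} = m + e^l` are single arrivals; so the jump balances exactly
when the two arrival ratios at `m`, weighted by the jump rates, agree, which is (4.2) or (4.4).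
Likewise placing a distinguished customer at a vacant site `k` multiplies the weight by
`ξ_k γ̄_k(n_k)/η_k`, giving (vi), and a leap `y → y + e^{j→j'}` passes through `y - e^j`,
where (4.11) gives (v).
-/

open Finset Function

section Configurations

variable {Λ : Type*} [DecidableEq Λ]

theorem bump_apply_self (n : Λ → ℕ) (k : Λ) : bump n k k = n k + 1 := by
  simp [bump]

theorem bump_apply_of_ne (n : Λ → ℕ) {k l : Λ} (h : l ≠ k) : bump n k l = n l := by
  simp [bump, h]

theorem exists_bump_eq_and_bump_eq_move {n : Λ → ℕ} {k l : Λ} (hk : 1 ≤ n k) (hkl : k ≠ l) :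
    ∃ m : Λ → ℕ, bump m k = n ∧ bump m l = move n k l ∧ m k = n k - 1 ∧ m l = n l := by
  refine ⟨update n k (n k - 1), funext fun q => ?_, funext fun q => ?_, by simp, by simp [hkl.symm]⟩
  all_goals simp only [bump, move, update_apply]; split_ifs <;> subst_vars <;> simp_all

theorem prod_bump_of_mem {M : Type*} [CommMonoid M] {s : Finset Λ} {p : Λ} (hp : p ∈ s)
    {g : Λ → ℕ → M} {r : ℕ → M} (hg : ∀ m, g p (m + 1) = g p m * r m) (n : Λ → ℕ) :
    ∏ j ∈ s, g j (bump n p j) = (∏ j ∈ s, g j (n j)) * r (n p) := by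
  rw [← mul_prod_erase s _ hp, ← mul_prod_erase s (fun j => g j (n j)) hp, bump_apply_self, hg,
    prod_congr rfl fun j hj => by rw [bump_apply_of_ne n (ne_of_mem_erase hj)], mul_right_comm]

theorem prod_bump_of_notMem {M : Type*} [CommMonoid M] {s : Finset Λ} {p : Λ} (hp : p ∉ s)
    (g : Λ → ℕ → M) (n : Λ → ℕ) :
    ∏ j ∈ s, g j (bump n p j) = ∏ j ∈ s, g j (n j) :=
  prod_congr rfl fun j hj => by rw [bump_apply_of_ne n (ne_of_mem_of_not_mem hj hp)]

theorem filter_bump_eq_insert [Fintype Λ] {y : Λ → ℕ} {k : Λ} (hk : y k = 0) :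
    univ.filter (fun j => bump y k j = 1) = insert k (univ.filter (fun j => y j = 1)) := by
  ext j
  simp only [mem_filter, mem_insert, mem_univ, true_and]
  by_cases hj : j = k
  · simp [hj, bump_apply_self, hk]
  · simp [hj, bump_apply_of_ne y hj]

end Configurations

section Balance

variable {Λ K : Type*} [DecidableEq Λ] [Field K]

theorem mul_eq_mul_of_balance {W W₁ W₂ a₁ b₁ a₂ b₂ x₁ x₂ : K} (h₁ : W * a₁ = W₁ * b₁)
    (h₂ : W * a₂ = W₂ * b₂) (hb₁ : b₁ ≠ 0) (hb₂ : b₂ ≠ 0)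
    (h : a₁ / b₁ * x₁ = a₂ / b₂ * x₂) : W₁ * x₁ = W₂ * x₂ := by
  have e₁ : W₁ = W * (a₁ / b₁) := by rw [mul_div_assoc', h₁, mul_div_cancel_right₀ _ hb₁]
  have e₂ : W₂ = W * (a₂ / b₂) := by rw [mul_div_assoc', h₂, mul_div_cancel_right₀ _ hb₂]
  rw [e₁, e₂, mul_assoc, mul_assoc, h]

theorem mul_eq_mul_move_of_balance {w : (Λ → ℕ) → K} {a b : Λ → ℕ → K}
    (hbal : ∀ m p, w m * a p (m p) = w (bump m p) * b p (m p + 1)) (hb : ∀ p c, b p c ≠ 0)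
    {n : Λ → ℕ} {k l : Λ} (hk : 1 ≤ n k) (hkl : k ≠ l) {x x' : K}
    (h : a k (n k - 1) / b k (n k) * x = a l (n l) / b l (n l + 1) * x') :
    w n * x = w (move n k l) * x' := by
  obtain ⟨m, hmk, hml, hmk', hml'⟩ := exists_bump_eq_and_bump_eq_move hk hkl
  have h₁ := hbal m k
  have h₂ := hbal m l
  rw [hmk, hmk', Nat.sub_add_cancel hk] at h₁
  rw [hml, hml'] at h₂
  exact mul_eq_mul_of_balance h₁ h₂ (hb _ _) (hb _ _) h

theorem mul_eq_mul_leap_of_balance {w : (Λ → ℕ) → K} {a b : Λ → K}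
    (hbal : ∀ z k, z k = 0 → w z * a k = w (bump z k) * b k) (hb : ∀ k, b k ≠ 0)
    {y : Λ → ℕ} {j j' : Λ} (hj : y j = 1) (hj' : y j' = 0) {x x' : K}
    (h : a j / b j * x = a j' / b j' * x') : w y * x = w (move y j j') * x' := by
  have hjj' : j ≠ j' := by rintro rfl; omega
  obtain ⟨z, hzj, hzj', hzj₀, hzj'₀⟩ := exists_bump_eq_and_bump_eq_move hj.ge hjj'
  have h₁ := hbal z j (by omega)
  have h₂ := hbal z j' (by rw [hzj'₀, hj'])
  rw [hzj] at h₁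
  rw [hzj'] at h₂
  exact mul_eq_mul_of_balance h₁ h₂ (hb _) (hb _) h

end Balance

section Weights

variable {Λ : Type*} [Fintype Λ] [DecidableEq Λ]

noncomputable def distinguishedWeight (ξ η : Λ → ℝ) (gamBar : Λ → ℕ → ℝ) (y n : Λ → ℕ) : ℝ :=
  ∏ j ∈ univ.filter (fun j => y j = 1), ξ j * gamBar j (n j) / η j

theorem prod_div_bump {lam mu lamBar muBar : Λ → ℕ → ℝ}
    (hlamBar : ∀ p m, lamBar p m = ∏ u ∈ range m, lam p u)
    (hmuBar : ∀ p m, muBar p m = ∏ u ∈ range m, mu p (u + 1)) (n : Λ → ℕ) (p : Λ) :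
    ∏ q, lamBar q (bump n p q) / muBar q (bump n p q) =
      (∏ q, lamBar q (n q) / muBar q (n q)) * (lam p (n p) / mu p (n p + 1)) :=
  prod_bump_of_mem (g := fun q m => lamBar q m / muBar q m) (mem_univ p)
    (fun m => by rw [hlamBar, hlamBar, hmuBar, hmuBar, prod_range_succ, prod_range_succ,
      div_mul_div_comm]) n

theorem distinguishedWeight_bump_queue {ξ η : Λ → ℝ} {gam gamBar : Λ → ℕ → ℝ}
    (hgamBar : ∀ p m, gamBar p m = ∏ u ∈ range m, gam p u) {y : Λ → ℕ} {p : Λ} (hp : y p ≤ 1)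
    (n : Λ → ℕ) :
    distinguishedWeight ξ η gamBar y (bump n p) =
      distinguishedWeight ξ η gamBar y n * gam p (n p) ^ y p := by
  unfold distinguishedWeight
  rcases Nat.le_one_iff_eq_zero_or_eq_one.mp hp with hp₀ | hp₁
  · rw [prod_bump_of_notMem (by simp [hp₀]) (fun j m => ξ j * gamBar j m / η j), hp₀, pow_zero,
      mul_one]
  · rw [hp₁, pow_one]
    refine prod_bump_of_mem (g := fun j m => ξ j * gamBar j m / η j) (by simp [hp₁]) (fun m => ?_) n
    rw [hgamBar, hgamBar, prod_range_succ]
    ring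

theorem distinguishedWeight_bump_occupied {ξ η : Λ → ℝ} {gamBar : Λ → ℕ → ℝ} {y : Λ → ℕ}
    {k : Λ} (hk : y k = 0) (n : Λ → ℕ) :
    distinguishedWeight ξ η gamBar (bump y k) n =
      distinguishedWeight ξ η gamBar y n * (ξ k * gamBar k (n k) / η k) := by
  rw [distinguishedWeight, filter_bump_eq_insert hk, prod_insert (by simp [hk]), mul_comm]
  rfl

theorem weight_mul_arrival {lam mu lamBar muBar gam gamBar : Λ → ℕ → ℝ} {ξ η : Λ → ℝ}
    {V : (Λ → ℕ) → ℝ} {y : Λ → ℕ} {w : (Λ → ℕ) → ℝ} (hmu : ∀ p a, mu p a ≠ 0)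
    (hlamBar : ∀ p m, lamBar p m = ∏ u ∈ range m, lam p u)
    (hmuBar : ∀ p m, muBar p m = ∏ u ∈ range m, mu p (u + 1))
    (hgamBar : ∀ p m, gamBar p m = ∏ u ∈ range m, gam p u)
    (hV : ∀ n, V n = ∏ q, lamBar q (n q) / muBar q (n q)) (hy : ∀ s, y s ≤ 1)
    (hw : ∀ n, w n = V n * distinguishedWeight ξ η gamBar y n) (n : Λ → ℕ) (p : Λ) :
    w n * (lam p (n p) * gam p (n p) ^ y p) = w (bump n p) * mu p (n p + 1) := by
  rw [hw, hw, hV, hV, prod_div_bump hlamBar hmuBar, distinguishedWeight_bump_queue hgamBar (hy p)]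
  field_simp [hmu]

theorem weight_mul_leap {gamBar : Λ → ℕ → ℝ} {ξ η : Λ → ℝ} {c : ℝ} {n : Λ → ℕ}
    {w : (Λ → ℕ) → ℝ} (hη : ∀ k, η k ≠ 0) (hw : ∀ y, w y = c * distinguishedWeight ξ η gamBar y n)
    {y : Λ → ℕ} {k : Λ} (hk : y k = 0) :
    w y * (ξ k * gamBar k (n k)) = w (bump y k) * η k := by
  rw [hw, hw, distinguishedWeight_bump_occupied hk]
  field_simp [hη]

end Weights

/-- Occupation configurations `y : Λ → {0,1}` are encoded as `y : Λ → ℕ` with `∀ s, y s ≤ 1`.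
-/
theorem exclusion_open_open_detailed_balance_general
    (Λ : Type*) [Fintype Λ] [DecidableEq Λ]
    (lam mu : Λ → ℕ → (Λ → ℕ) → ℝ) (gam : Λ → ℕ → ℝ)
    (hmu : ∀ p m y, 0 < mu p m y)
    (hgam : ∀ p m, 0 < gam p m)
    (lamBar muBar : Λ → ℕ → (Λ → ℕ) → ℝ) (gamBar : Λ → ℕ → ℝ)
    (hlamBar : ∀ p m y, lamBar p m y = ∏ u ∈ Finset.range m, lam p u y)
    (hmuBar : ∀ p m y, muBar p m y = ∏ u ∈ Finset.range m, mu p (u + 1) y)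
    (hgamBar : ∀ p m, gamBar p m = ∏ u ∈ Finset.range m, gam p u)
    (β θ ε : Λ → Λ → ℕ → ℕ → (Λ → ℕ) → ℝ) (τ : Λ → Λ → (Λ → ℕ) → (Λ → ℕ) → ℝ)
    (ξ η : Λ → ℝ) (hη : ∀ k, 0 < η k)
    -- (4.10): V(n) does not depend on y
    (V : (Λ → ℕ) → ℝ)
    (hV : ∀ (y : Λ → ℕ), (∀ s, y s ≤ 1) → ∀ n : Λ → ℕ,
      V n = ∏ q, lamBar q (n q) y / muBar q (n q) y)
    -- (4.2a)
    (h42a : ∀ (y : Λ → ℕ), (∀ s, y s ≤ 1) → ∀ (k l : Λ) (a b : ℕ),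
      k ≠ l → y k = 0 → y l = 0 → 1 ≤ a →
      lam k (a - 1) y / mu k a y * β k l a b y =
        lam l b y / mu l (b + 1) y * β l k (b + 1) (a - 1) y)
    -- (4.2b)
    (h42b : ∀ (y : Λ → ℕ), (∀ s, y s ≤ 1) → ∀ (j k : Λ) (a b : ℕ),
      y j = 1 → y k = 0 → 1 ≤ a →
      lam j (a - 1) y / mu j a y * θ j k a b y =
        lam k b y / mu k (b + 1) y * θ k j (b + 1) (a - 1) y)
    -- (4.4)
    (h44 : ∀ (y : Λ → ℕ), (∀ s, y s ≤ 1) → ∀ (i j : Λ) (a b : ℕ),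
      i ≠ j → y i = 1 → y j = 1 → 1 ≤ a →
      lam i (a - 1) y * gam i (a - 1) / mu i a y * ε i j a b y =
        lam j b y * gam j b / mu j (b + 1) y * ε j i (b + 1) (a - 1) y)
    -- (4.11)
    (h411 : ∀ (y : Λ → ℕ), (∀ s, y s ≤ 1) → ∀ (j j' : Λ) (n : Λ → ℕ),
      y j = 1 → y j' = 0 →
      τ j j' n y * ξ j / η j = τ j' j n (move y j j') * ξ j' / η j')
    (w : (Λ → ℕ) → (Λ → ℕ) → ℝ)
    (hw : ∀ (y n : Λ → ℕ), w y n =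
      V n * ∏ j ∈ Finset.univ.filter (fun j => y j = 1),
        ξ j * gamBar j (n j) / η j) :
    ∀ (y : Λ → ℕ), (∀ s, y s ≤ 1) → ∀ n : Λ → ℕ,
      -- (i) arrival at p paired with exit from p
      (∀ p, w y n * (lam p (n p) y * gam p (n p) ^ (y p)) =
        w y (bump n p) * mu p (n p + 1) y) ∧
      -- (ii) task jump between unloaded sites
      (∀ k l, y k = 0 → y l = 0 → k ≠ l → 1 ≤ n k →
        w y n * β k l (n k) (n l) y =
          w y (move n k l) * β l k (n l + 1) (n k - 1) y) ∧
      -- (iii) task jump between loaded sites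
      (∀ i j, y i = 1 → y j = 1 → i ≠ j → 1 ≤ n i →
        w y n * ε i j (n i) (n j) y =
          w y (move n i j) * ε j i (n j + 1) (n i - 1) y) ∧
      -- (iv) task jump from a loaded to an unloaded site
      (∀ j k, y j = 1 → y k = 0 → 1 ≤ n j →
        w y n * θ j k (n j) (n k) y =
          w y (move n j k) * (θ k j (n k + 1) (n j - 1) y * gam j (n j - 1))) ∧
      -- (v) leap of a distinguished customer
      (∀ j j', y j = 1 → y j' = 0 →
        w y n * (gamBar j (n j))⁻¹ * τ j j' n y =
          w (move y j j') n * (gamBar j' (n j'))⁻¹ * τ j' j n (move y j j')) ∧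
      -- (vi) arrival of a distinguished customer paired with its exit
      (∀ k, y k = 0 →
        w y n * (ξ k * gamBar k (n k)) = w (bump y k) n * η k) := by
  intro y hy n
  have arrival : ∀ m p, w y m * (lam p (m p) y * gam p (m p) ^ y p) =
      w y (bump m p) * mu p (m p + 1) y :=
    weight_mul_arrival (lam := (lam · · y)) (mu := (mu · · y)) (lamBar := (lamBar · · y))
      (muBar := (muBar · · y)) (fun p a => (hmu p a y).ne') (hlamBar · · y) (hmuBar · · y)
      hgamBar (hV y hy) hy (hw y)
  have leap : ∀ z k, z k = 0 → w z n * (ξ k * gamBar k (n k)) = w (bump z k) n * η k :=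
    fun z k => weight_mul_leap (w := (w · n)) (fun k => (hη k).ne') (hw · n)
  have jump : ∀ {k l}, 1 ≤ n k → k ≠ l → ∀ {x x'},
      lam k (n k - 1) y * gam k (n k - 1) ^ y k / mu k (n k) y * x =
        lam l (n l) y * gam l (n l) ^ y l / mu l (n l + 1) y * x' →
      w y n * x = w y (move n k l) * x' :=
    mul_eq_mul_move_of_balance (a := fun p c => lam p c y * gam p c ^ y p) arrival
      (fun p a => (hmu p a y).ne')
  refine ⟨arrival n, fun k l hk hl hkl hnk => ?_, fun i j hi hj hij hni => ?_,
    fun j k hj hk hnj => ?_, fun j j' hj hj' => ?_, leap y⟩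
  · refine jump hnk hkl ?_
    simpa only [hk, hl, pow_zero, mul_one] using h42a y hy k l (n k) (n l) hkl hk hl hnk
  · refine jump hni hij ?_
    simpa only [hi, hj, pow_one] using h44 y hy i j (n i) (n j) hij hi hj hni
  · have hjk : j ≠ k := by rintro rfl; omega
    refine jump hnj hjk ?_
    rw [hj, hk, pow_one, pow_zero, mul_one]
    linear_combination gam j (n j - 1) * h42b y hy j k (n j) (n k) hj hk hnj
  · have hγ : ∀ q m, gamBar q m ≠ 0 := fun q m => by
      rw [hgamBar]; exact prod_ne_zero_iff.mpr fun u _ => (hgam q u).ne'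
    rw [mul_assoc, mul_assoc]
    refine mul_eq_mul_leap_of_balance (leap · ·) (fun k => (hη k).ne') hj hj' ?_
    simp only [mul_div_right_comm _ (gamBar _ _), mul_assoc, mul_inv_cancel_left₀ (hγ _ _)]
    linear_combination h411 y hy j j' n hj hj'

/-- Theorem 4.2, simple exclusion, open-open network, detailed
balance: under conditions (4.10), (4.2), (4.4) and (4.11), the weights
`w(y,n) = V(n) ∏_{j:y_j=1} [ξ_j γ̄_j(n_j)/η_j]` satisfy detailed balance.
Occupation configurations `y : Λ → {0,1}` are encoded as `y : Λ → ℕ` with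
`∀ s, y s ≤ 1`. -/
theorem exclusion_open_open_detailed_balance
    (Λ : Type*) [Fintype Λ] [DecidableEq Λ] [Nonempty Λ]
    (lam mu : Λ → ℕ → (Λ → ℕ) → ℝ) (gam : Λ → ℕ → ℝ)
    (hlam : ∀ p m y, 0 ≤ lam p m y) (hmu : ∀ p m y, 0 < mu p m y)
    (hgam : ∀ p m, 0 < gam p m) (hgam0 : ∀ p, gam p 0 = 1)
    (lamBar muBar : Λ → ℕ → (Λ → ℕ) → ℝ) (gamBar : Λ → ℕ → ℝ)
    (hlamBar : ∀ p m y, lamBar p m y = ∏ u ∈ Finset.range m, lam p u y)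
    (hmuBar : ∀ p m y, muBar p m y = ∏ u ∈ Finset.range m, mu p (u + 1) y)
    (hgamBar : ∀ p m, gamBar p m = ∏ u ∈ Finset.range m, gam p u)
    (β θ ε : Λ → Λ → ℕ → ℕ → (Λ → ℕ) → ℝ) (τ : Λ → Λ → (Λ → ℕ) → (Λ → ℕ) → ℝ)
    (hβnn : ∀ k l a b y, 0 ≤ β k l a b y) (hθnn : ∀ j k a b y, 0 ≤ θ j k a b y)
    (hεnn : ∀ i j a b y, 0 ≤ ε i j a b y) (hτnn : ∀ j j' n y, 0 ≤ τ j j' n y)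
    (ξ η : Λ → ℝ) (hξ : ∀ k, 0 < ξ k) (hη : ∀ k, 0 < η k)
    -- (4.10): V(n) does not depend on y
    (V : (Λ → ℕ) → ℝ)
    (hV : ∀ (y : Λ → ℕ), (∀ s, y s ≤ 1) → ∀ n : Λ → ℕ,
      V n = ∏ q, lamBar q (n q) y / muBar q (n q) y)
    -- (4.2a)
    (h42a : ∀ (y : Λ → ℕ), (∀ s, y s ≤ 1) → ∀ (k l : Λ) (a b : ℕ),
      k ≠ l → y k = 0 → y l = 0 → 1 ≤ a →
      lam k (a - 1) y / mu k a y * β k l a b y =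
        lam l b y / mu l (b + 1) y * β l k (b + 1) (a - 1) y)
    -- (4.2b)
    (h42b : ∀ (y : Λ → ℕ), (∀ s, y s ≤ 1) → ∀ (j k : Λ) (a b : ℕ),
      y j = 1 → y k = 0 → 1 ≤ a →
      lam j (a - 1) y / mu j a y * θ j k a b y =
        lam k b y / mu k (b + 1) y * θ k j (b + 1) (a - 1) y)
    -- (4.4)
    (h44 : ∀ (y : Λ → ℕ), (∀ s, y s ≤ 1) → ∀ (i j : Λ) (a b : ℕ),
      i ≠ j → y i = 1 → y j = 1 → 1 ≤ a →
      lam i (a - 1) y * gam i (a - 1) / mu i a y * ε i j a b y =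
        lam j b y * gam j b / mu j (b + 1) y * ε j i (b + 1) (a - 1) y)
    -- (4.11)
    (h411 : ∀ (y : Λ → ℕ), (∀ s, y s ≤ 1) → ∀ (j j' : Λ) (n : Λ → ℕ),
      y j = 1 → y j' = 0 →
      τ j j' n y * ξ j / η j = τ j' j n (move y j j') * ξ j' / η j')
    (w : (Λ → ℕ) → (Λ → ℕ) → ℝ)
    (hw : ∀ (y n : Λ → ℕ), w y n =
      V n * ∏ j ∈ Finset.univ.filter (fun j => y j = 1),
        ξ j * gamBar j (n j) / η j) :
    ∀ (y : Λ → ℕ), (∀ s, y s ≤ 1) → ∀ n : Λ → ℕ,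
      -- (i) arrival at p paired with exit from p
      (∀ p, w y n * (lam p (n p) y * gam p (n p) ^ (y p)) =
        w y (bump n p) * mu p (n p + 1) y) ∧
      -- (ii) task jump between unloaded sites
      (∀ k l, y k = 0 → y l = 0 → k ≠ l → 1 ≤ n k →
        w y n * β k l (n k) (n l) y =
          w y (move n k l) * β l k (n l + 1) (n k - 1) y) ∧
      -- (iii) task jump between loaded sites
      (∀ i j, y i = 1 → y j = 1 → i ≠ j → 1 ≤ n i →
        w y n * ε i j (n i) (n j) y =
          w y (move n i j) * ε j i (n j + 1) (n i - 1) y) ∧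
      -- (iv) task jump from a loaded to an unloaded site
      (∀ j k, y j = 1 → y k = 0 → 1 ≤ n j →
        w y n * θ j k (n j) (n k) y =
          w y (move n j k) * (θ k j (n k + 1) (n j - 1) y * gam j (n j - 1))) ∧
      -- (v) leap of a distinguished customer
      (∀ j j', y j = 1 → y j' = 0 →
        w y n * (gamBar j (n j))⁻¹ * τ j j' n y =
          w (move y j j') n * (gamBar j' (n j'))⁻¹ * τ j' j n (move y j j')) ∧
      -- (vi) arrival of a distinguished customer paired with its exit
      (∀ k, y k = 0 →
        w y n * (ξ k * gamBar k (n k)) = w (bump y k) n * η k) :=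
  exclusion_open_open_detailed_balance_general Λ lam mu gam hmu hgam lamBar muBar gamBar hlamBar
    hmuBar hgamBar β θ ε τ ξ η hη V hV h42a h42b h44 h411 w hw
end

section
/- (Theorem 4.3, simple exclusion, closed-closed network, detailed balance) Fix M with 1 ≤ M ≤ #Λ and N ∈ ℕ. Suppose the symmetry conditions (4.15)–(4.16) hold: β_{kl}(n_k,n_l;y) = β_{lk}(n_l+1,n_k−1;y) for k ≠ l, y_k = y_l = 0, n_k ≥ 1; θ_{jk}(n_j,n_k;y) = θ_{kj}(n_k+1,n_j−1;y) for y_j = 1, y_k = 0, n_j ≥ 1; ε_{ij}(n_i,n_j;y)·γ_i(n_i−1) = γ_j(n_j)·ε_{ji}(n_j+1,n_i−1;y) for i ≠ j, y_i = y_j = 1, n_i ≥ 1; and τ_{jj'}(n;y) = τ_{j'j}(n;y+e^{j→j'}) for y_j = 1, y_{j'} = 0. Then on {(y,n) : |y| = M, |n| = N} the weight w(y,n) = ∏_{j : y_j = 1} γ̄_j(n_j) satisfies the detailed balance equations: (i) w(y,n)·β_{kl}(n_k,n_l;y) = w(y, n+e^{k→l})·β_{lk}(n_l+1,n_k−1;y)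 for y_k = y_l = 0, k ≠ l, n_k ≥ 1; (ii) w(y,n)·ε_{ij}(n_i,n_j;y) = w(y, n+e^{i→j})·ε_{ji}(n_j+1,n_i−1;y) for y_i = y_j = 1, i ≠ j, n_i ≥ 1; (iii) w(y,n)·θ_{jk}(n_j,n_k;y) = w(y, n+e^{j→k})·θ_{kj}(n_k+1,n_j−1;y)·γ_j(n_j−1) for y_j = 1, y_k = 0, n_j ≥ 1; (iv) w(y,n)·θ_{kj}(n_k,n_j;y)·γ_j(n_j) = w(y, n+e^{k→j})·θ_{jk}(n_j+1,n_k−1;y) for y_j = 1, y_k = 0, n_k ≥ 1; (v) w(y,n)·γ̄_j(n_j)^{−1}·τ_{jj'}(n;y) = w(y+e^{j→j'}, n)·γ̄_{j'}(n_{j'})^{−1}·τ_{j'j}(n;y+e^{j→j'}) for y_j = 1, y_{j'} = 0. -/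
/-!
A jump `n + e^{i→k}` changes `n` at the two sites `i` and `k` only, and the weight
`w(y,n) = ∏_{y_j = 1} γ̄_j(n_j)` reads `n` at the loaded sites only. So each of (i)–(iv) reduces
to the factors of at most two sites, where it follows from `γ̄_j(m + 1) = γ̄_j(m) γ_j(m)` and the
matching symmetry condition. Moving the distinguished customer from `j` to `j'` trades the factor
`γ̄_j(n_j)` of `w` for `γ̄_{j'}(n_{j'})`, which the inverse factors in (v) cancel.
-/

open Finset

section

variable {Λ : Type*} [DecidableEq Λ]

theorem move_apply_of_ne {n : Λ → ℕ} {i k s : Λ} (hi : s ≠ i) (hk : s ≠ k) :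
    move n i k s = n s := by
  simp [move, hi, hk]

theorem move_apply_left {n : Λ → ℕ} {i k : Λ} (h : i ≠ k) : move n i k i = n i - 1 := by
  simp [move, h]

theorem move_apply_right {n : Λ → ℕ} {i k : Λ} (h : i ≠ k) : move n i k k = n k + 1 := by
  simp [move, h.symm]

end

section

variable {Λ : Type*} [Fintype Λ]

def loaded (y : Λ → ℕ) : Finset Λ :=
  univ.filter fun j => y j = 1

def loadedWeight (g : Λ → ℕ → ℝ) (y n : Λ → ℕ) : ℝ :=
  ∏ j ∈ loaded y, g j (n j)

theorem mem_loaded {y : Λ → ℕ} {j : Λ} : j ∈ loaded y ↔ y j = 1 := by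
  simp [loaded]

variable [DecidableEq Λ]

theorem loaded_move {y : Λ → ℕ} {j j' : Λ} (hj : y j = 1) (hj' : y j' = 0) :
    loaded (move y j j') = insert j' (loaded y \ {j}) := by
  have hjj' : j ≠ j' := by rintro rfl; omega
  ext s
  simp only [mem_loaded, mem_insert, mem_sdiff, mem_singleton]
  rcases eq_or_ne s j' with rfl | hs'
  · simp [move_apply_right hjj', hj']
  rcases eq_or_ne s j with rfl | hs
  · simp [move_apply_left hjj', hj, hs']
  · simp [move_apply_of_ne hs hs', hs, hs']

variable {g : Λ → ℕ → ℝ} {y m n : Λ → ℕ}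

theorem loadedWeight_eq_of_eqOn_sdiff {T : Finset Λ} (hT : T ⊆ loaded y)
    (h : ∀ s ∈ loaded y \ T, m s = n s) :
    loadedWeight g y m = (∏ s ∈ loaded y \ T, g s (n s)) * ∏ s ∈ T, g s (m s) := by
  rw [loadedWeight, ← prod_sdiff hT, prod_congr rfl fun s hs => by rw [h s hs]]

theorem loadedWeight_move_of_unloaded {k l : Λ} (hk : y k ≠ 1) (hl : y l ≠ 1) :
    loadedWeight g y (move n k l) = loadedWeight g y n := by
  have hfix : ∀ s ∈ loaded y \ ∅, move n k l s = n s := fun s hs => by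
    rw [sdiff_empty, mem_loaded] at hs
    exact move_apply_of_ne (by rintro rfl; exact hk hs) (by rintro rfl; exact hl hs)
  rw [loadedWeight_eq_of_eqOn_sdiff (empty_subset _) hfix, sdiff_empty, prod_empty, mul_one,
    loadedWeight]

variable {gam : Λ → ℕ → ℝ}

theorem loadedWeight_mul_eq_of_loaded_loaded
    (hsucc : ∀ p m, g p (m + 1) = g p m * gam p m) {i j : Λ} (hi : y i = 1) (hj : y j = 1)
    (hij : i ≠ j) (hni : 1 ≤ n i) {r r' : ℝ} (hr : r * gam i (n i - 1) = gam j (n j) * r') :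
    loadedWeight g y n * r = loadedWeight g y (move n i j) * r' := by
  have hT : {i, j} ⊆ loaded y := by simp [insert_subset_iff, mem_loaded, hi, hj]
  have hfix : ∀ s ∈ loaded y \ {i, j}, move n i j s = n s := fun s hs => by
    simp only [mem_sdiff, mem_insert, mem_singleton, not_or] at hs
    exact move_apply_of_ne hs.2.1 hs.2.2
  rw [loadedWeight_eq_of_eqOn_sdiff hT fun _ _ => rfl, loadedWeight_eq_of_eqOn_sdiff hT hfix,
    prod_pair hij, prod_pair hij, move_apply_left hij, move_apply_right hij, hsucc j,
    ← Nat.sub_add_cancel hni, hsucc i, Nat.add_sub_cancel]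
  linear_combination (∏ s ∈ loaded y \ {i, j}, g s (n s)) * g i (n i - 1) * g j (n j) * hr

theorem loadedWeight_eq_move_loaded_unloaded_mul
    (hsucc : ∀ p m, g p (m + 1) = g p m * gam p m) {j k : Λ} (hj : y j = 1) (hk : y k ≠ 1)
    (hnj : 1 ≤ n j) :
    loadedWeight g y n = loadedWeight g y (move n j k) * gam j (n j - 1) := by
  have hjk : j ≠ k := by rintro rfl; exact hk hj
  have hT : {j} ⊆ loaded y := by simp [mem_loaded, hj]
  have hfix : ∀ s ∈ loaded y \ {j}, move n j k s = n s := fun s hs => by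
    rw [mem_sdiff, mem_loaded, mem_singleton] at hs
    exact move_apply_of_ne hs.2 (by rintro rfl; exact hk hs.1)
  rw [loadedWeight_eq_of_eqOn_sdiff hT fun _ _ => rfl, loadedWeight_eq_of_eqOn_sdiff hT hfix,
    prod_singleton, prod_singleton, move_apply_left hjk, mul_assoc, ← hsucc,
    Nat.sub_add_cancel hnj]

theorem loadedWeight_move_unloaded_loaded
    (hsucc : ∀ p m, g p (m + 1) = g p m * gam p m) {j k : Λ} (hj : y j = 1) (hk : y k ≠ 1) :
    loadedWeight g y (move n k j) = loadedWeight g y n * gam j (n j) := by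
  have hkj : k ≠ j := by rintro rfl; exact hk hj
  have hT : {j} ⊆ loaded y := by simp [mem_loaded, hj]
  have hfix : ∀ s ∈ loaded y \ {j}, move n k j s = n s := fun s hs => by
    rw [mem_sdiff, mem_loaded, mem_singleton] at hs
    exact move_apply_of_ne (by rintro rfl; exact hk hs.1) hs.2
  rw [loadedWeight_eq_of_eqOn_sdiff hT hfix, loadedWeight_eq_of_eqOn_sdiff hT fun _ _ => rfl,
    prod_singleton, prod_singleton, move_apply_right hkj, hsucc, mul_assoc]

theorem loadedWeight_mul_inv_eq_of_leap (hg : ∀ p m, g p m ≠ 0) {j j' : Λ} (hj : y j = 1)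
    (hj' : y j' = 0) :
    loadedWeight g y n * (g j (n j))⁻¹ = loadedWeight g (move y j j') n * (g j' (n j'))⁻¹ := by
  have hT : {j} ⊆ loaded y := by simp [mem_loaded, hj]
  have hj'_notMem : j' ∉ loaded y \ {j} := by simp [mem_loaded, hj']
  rw [loadedWeight_eq_of_eqOn_sdiff hT fun _ _ => rfl, prod_singleton, loadedWeight,
    loaded_move hj hj', prod_insert hj'_notMem, mul_inv_cancel_right₀ (hg _ _),
    mul_comm, inv_mul_cancel_left₀ (hg _ _)]

end

theorem exclusion_closed_closed_detailed_balance_general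
    (Λ : Type*) [Fintype Λ] [DecidableEq Λ]
    (M : ℕ) (N : ℕ)
    (gam : Λ → ℕ → ℝ)
    (hgam : ∀ p m, 0 < gam p m)
    (gamBar : Λ → ℕ → ℝ)
    (hgamBar : ∀ p m, gamBar p m = ∏ u ∈ Finset.range m, gam p u)
    (β θ ε : Λ → Λ → ℕ → ℕ → (Λ → ℕ) → ℝ) (τ : Λ → Λ → (Λ → ℕ) → (Λ → ℕ) → ℝ)
    -- (4.15)
    (hβ : ∀ (y : Λ → ℕ), (∀ s, y s ≤ 1) → ∀ (k l : Λ) (a b : ℕ),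
      k ≠ l → y k = 0 → y l = 0 → 1 ≤ a →
      β k l a b y = β l k (b + 1) (a - 1) y)
    (hθ : ∀ (y : Λ → ℕ), (∀ s, y s ≤ 1) → ∀ (j k : Λ) (a b : ℕ),
      y j = 1 → y k = 0 → 1 ≤ a →
      θ j k a b y = θ k j (b + 1) (a - 1) y)
    (hε : ∀ (y : Λ → ℕ), (∀ s, y s ≤ 1) → ∀ (i j : Λ) (a b : ℕ),
      i ≠ j → y i = 1 → y j = 1 → 1 ≤ a →
      ε i j a b y * gam i (a - 1) = gam j b * ε j i (b + 1) (a - 1) y)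
    -- (4.16)
    (hτ : ∀ (y : Λ → ℕ), (∀ s, y s ≤ 1) → ∀ (j j' : Λ) (n : Λ → ℕ),
      y j = 1 → y j' = 0 → τ j j' n y = τ j' j n (move y j j'))
    (w : (Λ → ℕ) → (Λ → ℕ) → ℝ)
    (hw : ∀ (y n : Λ → ℕ), w y n =
      ∏ j ∈ Finset.univ.filter (fun j => y j = 1), gamBar j (n j)) :
    ∀ (y : Λ → ℕ), (∀ s, y s ≤ 1) → ∑ s, y s = M → ∀ n : Λ → ℕ, ∑ s, n s = N →
      -- (i) task jump between unloaded sites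
      (∀ k l, y k = 0 → y l = 0 → k ≠ l → 1 ≤ n k →
        w y n * β k l (n k) (n l) y =
          w y (move n k l) * β l k (n l + 1) (n k - 1) y) ∧
      -- (ii) task jump between loaded sites
      (∀ i j, y i = 1 → y j = 1 → i ≠ j → 1 ≤ n i →
        w y n * ε i j (n i) (n j) y =
          w y (move n i j) * ε j i (n j + 1) (n i - 1) y) ∧
      -- (iii) task jump from a loaded to an unloaded site
      (∀ j k, y j = 1 → y k = 0 → 1 ≤ n j →
        w y n * θ j k (n j) (n k) y =
          w y (move n j k) * (θ k j (n k + 1) (n j - 1) y * gam j (n j - 1))) ∧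
      -- (iv) task jump from an unloaded to a loaded site
      (∀ j k, y j = 1 → y k = 0 → 1 ≤ n k →
        w y n * (θ k j (n k) (n j) y * gam j (n j)) =
          w y (move n k j) * θ j k (n j + 1) (n k - 1) y) ∧
      -- (v) leap of a distinguished customer
      (∀ j j', y j = 1 → y j' = 0 →
        w y n * (gamBar j (n j))⁻¹ * τ j j' n y =
          w (move y j j') n * (gamBar j' (n j'))⁻¹ * τ j' j n (move y j j')) := by
  obtain rfl : w = loadedWeight gamBar := funext₂ hw
  have hsucc : ∀ p m, gamBar p (m + 1) = gamBar p m * gam p m := fun p m => by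
    rw [hgamBar, hgamBar, prod_range_succ]
  have hgamBar_ne : ∀ p m, gamBar p m ≠ 0 := fun p m =>
    hgamBar p m ▸ (prod_pos fun u _ => hgam p u).ne'
  intro y hy _ n _
  refine ⟨fun k l hk hl hkl hnk => ?_, fun i j hi hj hij hni => ?_, fun j k hj hk hnj => ?_,
    fun j k hj hk hnk => ?_, fun j j' hj hj' => ?_⟩
  · rw [loadedWeight_move_of_unloaded (by omega) (by omega), hβ y hy k l _ _ hkl hk hl hnk]
  · exact loadedWeight_mul_eq_of_loaded_loaded hsucc hi hj hij hni
      (hε y hy i j _ _ hij hi hj hni)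
  · rw [loadedWeight_eq_move_loaded_unloaded_mul (k := k) hsucc hj (by omega) hnj,
      hθ y hy j k _ _ hj hk hnj]
    ring
  · have hθ_rev := hθ y hy j k (n j + 1) (n k - 1) hj hk (by omega)
    rw [Nat.sub_add_cancel hnk, Nat.add_sub_cancel] at hθ_rev
    rw [loadedWeight_move_unloaded_loaded hsucc hj (by omega), hθ_rev]
    ring
  · rw [loadedWeight_mul_inv_eq_of_leap hgamBar_ne hj hj', hτ y hy j j' n hj hj']

/-- Theorem 4.3, simple exclusion, closed-closed network, detailed
balance: under symmetry conditions (4.15)-(4.16), on `{(y,n) : |y|=M, |n|=N}`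
the weights `w(y,n) = ∏_{j:y_j=1} γ̄_j(n_j)` satisfy detailed balance.
Occupation configurations `y : Λ → {0,1}` are encoded as `y : Λ → ℕ` with
`∀ s, y s ≤ 1`. -/
theorem exclusion_closed_closed_detailed_balance
    (Λ : Type*) [Fintype Λ] [DecidableEq Λ] [Nonempty Λ]
    (M : ℕ) (hM1 : 1 ≤ M) (hM2 : M ≤ Fintype.card Λ) (N : ℕ)
    (gam : Λ → ℕ → ℝ)
    (hgam : ∀ p m, 0 < gam p m) (hgam0 : ∀ p, gam p 0 = 1)
    (gamBar : Λ → ℕ → ℝ)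
    (hgamBar : ∀ p m, gamBar p m = ∏ u ∈ Finset.range m, gam p u)
    (β θ ε : Λ → Λ → ℕ → ℕ → (Λ → ℕ) → ℝ) (τ : Λ → Λ → (Λ → ℕ) → (Λ → ℕ) → ℝ)
    (hβnn : ∀ k l a b y, 0 ≤ β k l a b y) (hθnn : ∀ j k a b y, 0 ≤ θ j k a b y)
    (hεnn : ∀ i j a b y, 0 ≤ ε i j a b y) (hτnn : ∀ j j' n y, 0 ≤ τ j j' n y)
    -- (4.15)
    (hβ : ∀ (y : Λ → ℕ), (∀ s, y s ≤ 1) → ∀ (k l : Λ) (a b : ℕ),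
      k ≠ l → y k = 0 → y l = 0 → 1 ≤ a →
      β k l a b y = β l k (b + 1) (a - 1) y)
    (hθ : ∀ (y : Λ → ℕ), (∀ s, y s ≤ 1) → ∀ (j k : Λ) (a b : ℕ),
      y j = 1 → y k = 0 → 1 ≤ a →
      θ j k a b y = θ k j (b + 1) (a - 1) y)
    (hε : ∀ (y : Λ → ℕ), (∀ s, y s ≤ 1) → ∀ (i j : Λ) (a b : ℕ),
      i ≠ j → y i = 1 → y j = 1 → 1 ≤ a →
      ε i j a b y * gam i (a - 1) = gam j b * ε j i (b + 1) (a - 1) y)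
    -- (4.16)
    (hτ : ∀ (y : Λ → ℕ), (∀ s, y s ≤ 1) → ∀ (j j' : Λ) (n : Λ → ℕ),
      y j = 1 → y j' = 0 → τ j j' n y = τ j' j n (move y j j'))
    (w : (Λ → ℕ) → (Λ → ℕ) → ℝ)
    (hw : ∀ (y n : Λ → ℕ), w y n =
      ∏ j ∈ Finset.univ.filter (fun j => y j = 1), gamBar j (n j)) :
    ∀ (y : Λ → ℕ), (∀ s, y s ≤ 1) → ∑ s, y s = M → ∀ n : Λ → ℕ, ∑ s, n s = N →
      -- (i) task jump between unloaded sites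
      (∀ k l, y k = 0 → y l = 0 → k ≠ l → 1 ≤ n k →
        w y n * β k l (n k) (n l) y =
          w y (move n k l) * β l k (n l + 1) (n k - 1) y) ∧
      -- (ii) task jump between loaded sites
      (∀ i j, y i = 1 → y j = 1 → i ≠ j → 1 ≤ n i →
        w y n * ε i j (n i) (n j) y =
          w y (move n i j) * ε j i (n j + 1) (n i - 1) y) ∧
      -- (iii) task jump from a loaded to an unloaded site
      (∀ j k, y j = 1 → y k = 0 → 1 ≤ n j →
        w y n * θ j k (n j) (n k) y =
          w y (move n j k) * (θ k j (n k + 1) (n j - 1) y * gam j (n j - 1))) ∧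
      -- (iv) task jump from an unloaded to a loaded site
      (∀ j k, y j = 1 → y k = 0 → 1 ≤ n k →
        w y n * (θ k j (n k) (n j) y * gam j (n j)) =
          w y (move n k j) * θ j k (n j + 1) (n k - 1) y) ∧
      -- (v) leap of a distinguished customer
      (∀ j j', y j = 1 → y j' = 0 →
        w y n * (gamBar j (n j))⁻¹ * τ j j' n y =
          w (move y j j') n * (gamBar j' (n j'))⁻¹ * τ j' j n (move y j j')) :=
  exclusion_closed_closed_detailed_balance_general Λ M N gam hgam gamBar hgamBar β θ ε τ hβ hθ hε hτ
    w hw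
end

section
/- (Theorem 4.4, simple exclusion, open-closed network, detailed balance) Fix N ∈ ℕ. Suppose the symmetry conditions hold: β_{kl}(n_k,n_l;y) = β_{lk}(n_l+1,n_k−1;y) for k ≠ l, y_k = y_l = 0, n_k ≥ 1; θ_{jk}(n_j,n_k;y) = θ_{kj}(n_k+1,n_j−1;y) for y_j = 1, y_k = 0, n_j ≥ 1; ε_{ij}(n_i,n_j;y)·γ_i(n_i−1) = γ_j(n_j)·ε_{ji}(n_j+1,n_i−1;y) for i ≠ j, y_i = y_j = 1, n_i ≥ 1; and (4.11) τ_{jj'}(n;y)·ξ_j/η_j = τ_{j'j}(n;y+e^{j→j'})·ξ_{j'}/η_{j'} for y_j = 1, y_{j'} = 0. Then on {(y,n) : |n| = N} the weight w(y,n) = ∏_{q∈Λ} [ξ_q γ̄_q(n_q)/η_q]^{y_q} satisfies the detailed balance equations: (i) w(y,n)·β_{kl}(n_k,n_l;y) = w(y, n+e^{k→l})·β_{lk}(n_l+1,n_k−1;y) for y_k = y_l = 0, k ≠ l, n_k ≥ 1; (ii) w(y,n)·ε_{ij}(n_i,n_j;y) = w(y, n+e^{i→j})·ε_{ji}(n_j+1,n_i−1;y)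 for y_i = y_j = 1, i ≠ j, n_i ≥ 1; (iii) w(y,n)·θ_{jk}(n_j,n_k;y) = w(y, n+e^{j→k})·θ_{kj}(n_k+1,n_j−1;y)·γ_j(n_j−1) for y_j = 1, y_k = 0, n_j ≥ 1; (iv) w(y,n)·θ_{kj}(n_k,n_j;y)·γ_j(n_j) = w(y, n+e^{k→j})·θ_{jk}(n_j+1,n_k−1;y) for y_j = 1, y_k = 0, n_k ≥ 1; (v) w(y,n)·γ̄_j(n_j)^{−1}·τ_{jj'}(n;y) = w(y+e^{j→j'}, n)·γ̄_{j'}(n_{j'})^{−1}·τ_{j'j}(n;y+e^{j→j'}) for y_j = 1, y_{j'} = 0; (vi) w(y,n)·ξ_k γ̄_k(n_k) = w(y+e^k, n)·η_k whenever y_k = 0. -/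
/-!
Adding a customer at site `k` multiplies the weight by `γ_k(n_k)^{y_k}`, and adding a
distinguished customer there multiplies it by `ξ_k γ̄_k(n_k)/η_k`. A move `n + e^{i→k}`
(or `y + e^{j→j'}`) is `m + e^k` for the configuration `m` with `m + e^i` the old one, so the
weight changes by an explicit ratio and each detailed balance equation reduces to the matching
symmetry condition.
-/

section Configurations

variable {Λ : Type*} [DecidableEq Λ]

theorem bump_update_sub_one_self (n : Λ → ℕ) {i : Λ} (hi : 1 ≤ n i) :
    bump (Function.update n i (n i - 1)) i = n := by
  funext l
  by_cases hl : l = i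
  · subst hl
    simp only [bump, Function.update_self, if_true]
    omega
  · simp [bump, hl]

theorem bump_update_sub_one (n : Λ → ℕ) (i k : Λ) :
    bump (Function.update n i (n i - 1)) k = move n i k := by
  funext l
  by_cases hl : l = i <;> simp [bump, move, hl]

end Configurations

section ProductWeights

variable {Λ M : Type*} [Fintype Λ] [DecidableEq Λ] [CommMonoid M]

theorem prod_pow_bump (b : Λ → M) (y : Λ → ℕ) (k : Λ) :
    ∏ q, b q ^ bump y k q = (∏ q, b q ^ y q) * b k := by
  simp only [bump, pow_add, Finset.prod_mul_distrib, pow_ite, pow_one, pow_zero,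
    Finset.prod_ite_eq', Finset.mem_univ, if_true]

theorem prod_pow_move_mul (b : Λ → M) (y : Λ → ℕ) {j : Λ} (hj : 1 ≤ y j) (j' : Λ) :
    (∏ q, b q ^ move y j j' q) * b j = (∏ q, b q ^ y q) * b j' := by
  rw [← bump_update_sub_one, prod_pow_bump, mul_right_comm, ← prod_pow_bump,
    bump_update_sub_one_self y hj]

variable {c r : Λ → ℕ → M}

theorem prod_bump_pow (hc : ∀ q m, c q (m + 1) = c q m * r q m) (y n : Λ → ℕ) (k : Λ) :
    ∏ q, c q (bump n k q) ^ y q = (∏ q, c q (n q) ^ y q) * r k (n k) ^ y k := by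
  have hfactor : ∀ q, c q (bump n k q) ^ y q =
      c q (n q) ^ y q * if q = k then r k (n k) ^ y k else 1 := by
    intro q
    by_cases hq : q = k
    · subst hq; simp [bump, hc, mul_pow]
    · simp [bump, hq]
  simp only [hfactor, Finset.prod_mul_distrib, Finset.prod_ite_eq', Finset.mem_univ, if_true]

theorem prod_move_pow_mul (hc : ∀ q m, c q (m + 1) = c q m * r q m) (y n : Λ → ℕ) {i k : Λ}
    (hik : i ≠ k) (hi : 1 ≤ n i) :
    (∏ q, c q (move n i k q) ^ y q) * r i (n i - 1) ^ y i =
      (∏ q, c q (n q) ^ y q) * r k (n k) ^ y k := by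
  set m := Function.update n i (n i - 1)
  have hmi : m i = n i - 1 := Function.update_self i _ n
  have hmk : m k = n k := Function.update_of_ne hik.symm _ n
  calc (∏ q, c q (move n i k q) ^ y q) * r i (n i - 1) ^ y i
      = (∏ q, c q (bump m k q) ^ y q) * r i (m i) ^ y i := by
        rw [bump_update_sub_one, hmi]
    _ = (∏ q, c q (m q) ^ y q) * r i (m i) ^ y i * r k (m k) ^ y k := by
        rw [prod_bump_pow hc, mul_right_comm]
    _ = (∏ q, c q (n q) ^ y q) * r k (n k) ^ y k := by
        rw [← prod_bump_pow hc, bump_update_sub_one_self n hi, hmk]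

end ProductWeights

section DetailedBalance

variable {Λ : Type*} [Fintype Λ] [DecidableEq Λ]

noncomputable def productWeight (ξ η : Λ → ℝ) (gamBar : Λ → ℕ → ℝ) (y n : Λ → ℕ) : ℝ :=
  ∏ q, (ξ q * gamBar q (n q) / η q) ^ y q

variable {gam gamBar : Λ → ℕ → ℝ} {ξ η : Λ → ℝ}

theorem productWeight_move_mul (hgamBar : ∀ p m, gamBar p m = ∏ u ∈ Finset.range m, gam p u)
    (ξ η : Λ → ℝ) (y n : Λ → ℕ) {i k : Λ} (hik : i ≠ k) (hi : 1 ≤ n i) :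
    productWeight ξ η gamBar y (move n i k) * gam i (n i - 1) ^ y i =
      productWeight ξ η gamBar y n * gam k (n k) ^ y k := by
  refine prod_move_pow_mul (c := fun q m => ξ q * gamBar q m / η q) (fun q m => ?_) y n hik hi
  rw [hgamBar, hgamBar, Finset.prod_range_succ]
  ring

theorem productWeight_mul_eq_bump_mul (y n : Λ → ℕ) {k : Λ} (hηk : η k ≠ 0) :
    productWeight ξ η gamBar y n * (ξ k * gamBar k (n k)) =
      productWeight ξ η gamBar (bump y k) n * η k := by
  rw [productWeight, productWeight, prod_pow_bump]
  field_simp [hηk]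

theorem productWeight_leap (hgamBar : ∀ p m, gamBar p m ≠ 0) (hξ : ∀ k, ξ k ≠ 0)
    (hη : ∀ k, η k ≠ 0) (y n : Λ → ℕ) {j : Λ} (hj : 1 ≤ y j) (j' : Λ) {t t' : ℝ}
    (ht : t * ξ j / η j = t' * ξ j' / η j') :
    productWeight ξ η gamBar y n * (gamBar j (n j))⁻¹ * t =
      productWeight ξ η gamBar (move y j j') n * (gamBar j' (n j'))⁻¹ * t' := by
  have hw : productWeight ξ η gamBar (move y j j') n * (ξ j * gamBar j (n j) / η j) =
      productWeight ξ η gamBar y n * (ξ j' * gamBar j' (n j') / η j') :=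
    prod_pow_move_mul (fun q => ξ q * gamBar q (n q) / η q) y hj j'
  field_simp [hgamBar, hη] at hw ht ⊢
  apply mul_right_cancel₀ (mul_ne_zero (hξ j) (hη j'))
  linear_combination productWeight ξ η gamBar y n * gamBar j' (n j') * ht - t' * hw

end DetailedBalance

theorem exclusion_open_closed_detailed_balance_general
    (Λ : Type*) [Fintype Λ] [DecidableEq Λ] (N : ℕ)
    (gam : Λ → ℕ → ℝ)
    (hgam : ∀ p m, 0 < gam p m)
    (gamBar : Λ → ℕ → ℝ)
    (hgamBar : ∀ p m, gamBar p m = ∏ u ∈ Finset.range m, gam p u)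
    (β θ ε : Λ → Λ → ℕ → ℕ → (Λ → ℕ) → ℝ) (τ : Λ → Λ → (Λ → ℕ) → (Λ → ℕ) → ℝ)
    (ξ η : Λ → ℝ) (hξ : ∀ k, 0 < ξ k) (hη : ∀ k, 0 < η k)
    -- symmetry conditions
    (hβ : ∀ (y : Λ → ℕ), (∀ s, y s ≤ 1) → ∀ (k l : Λ) (a b : ℕ),
      k ≠ l → y k = 0 → y l = 0 → 1 ≤ a →
      β k l a b y = β l k (b + 1) (a - 1) y)
    (hθ : ∀ (y : Λ → ℕ), (∀ s, y s ≤ 1) → ∀ (j k : Λ) (a b : ℕ),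
      y j = 1 → y k = 0 → 1 ≤ a →
      θ j k a b y = θ k j (b + 1) (a - 1) y)
    (hε : ∀ (y : Λ → ℕ), (∀ s, y s ≤ 1) → ∀ (i j : Λ) (a b : ℕ),
      i ≠ j → y i = 1 → y j = 1 → 1 ≤ a →
      ε i j a b y * gam i (a - 1) = gam j b * ε j i (b + 1) (a - 1) y)
    -- (4.11)
    (h411 : ∀ (y : Λ → ℕ), (∀ s, y s ≤ 1) → ∀ (j j' : Λ) (n : Λ → ℕ),
      y j = 1 → y j' = 0 →
      τ j j' n y * ξ j / η j = τ j' j n (move y j j') * ξ j' / η j')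
    (w : (Λ → ℕ) → (Λ → ℕ) → ℝ)
    (hw : ∀ (y n : Λ → ℕ), w y n =
      ∏ q, (ξ q * gamBar q (n q) / η q) ^ (y q)) :
    ∀ (y : Λ → ℕ), (∀ s, y s ≤ 1) → ∀ n : Λ → ℕ, ∑ s, n s = N →
      -- (i) task jump between unloaded sites
      (∀ k l, y k = 0 → y l = 0 → k ≠ l → 1 ≤ n k →
        w y n * β k l (n k) (n l) y =
          w y (move n k l) * β l k (n l + 1) (n k - 1) y) ∧
      -- (ii) task jump between loaded sites
      (∀ i j, y i = 1 → y j = 1 → i ≠ j → 1 ≤ n i →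
        w y n * ε i j (n i) (n j) y =
          w y (move n i j) * ε j i (n j + 1) (n i - 1) y) ∧
      -- (iii) task jump from a loaded to an unloaded site
      (∀ j k, y j = 1 → y k = 0 → 1 ≤ n j →
        w y n * θ j k (n j) (n k) y =
          w y (move n j k) * (θ k j (n k + 1) (n j - 1) y * gam j (n j - 1))) ∧
      -- (iv) task jump from an unloaded to a loaded site
      (∀ j k, y j = 1 → y k = 0 → 1 ≤ n k →
        w y n * (θ k j (n k) (n j) y * gam j (n j)) =
          w y (move n k j) * θ j k (n j + 1) (n k - 1) y) ∧
      -- (v) leap of a distinguished customer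
      (∀ j j', y j = 1 → y j' = 0 →
        w y n * (gamBar j (n j))⁻¹ * τ j j' n y =
          w (move y j j') n * (gamBar j' (n j'))⁻¹ * τ j' j n (move y j j')) ∧
      -- (vi) arrival of a distinguished customer paired with its exit
      (∀ k, y k = 0 →
        w y n * (ξ k * gamBar k (n k)) = w (bump y k) n * η k) := by
  intro y hy n _
  obtain rfl : w = productWeight ξ η gamBar := funext₂ hw
  have hne : ∀ {j k}, y j = 1 → y k = 0 → j ≠ k := by
    rintro j k hj hk rfl
    omega
  refine ⟨fun k l hk hl hkl hnk => ?_, fun i j hi hj hij hni => ?_, fun j k hj hk hnj => ?_,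
    fun j k hj hk hnk => ?_, fun j j' hj hj' => ?_,
    fun k _ => productWeight_mul_eq_bump_mul y n (hη k).ne'⟩
  · have hw := productWeight_move_mul hgamBar ξ η y n hkl hnk
    simp only [hk, hl, pow_zero, mul_one] at hw
    rw [hw, hβ y hy k l (n k) (n l) hkl hk hl hnk]
  · have hw := productWeight_move_mul hgamBar ξ η y n hij hni
    simp only [hi, hj, pow_one] at hw
    apply mul_right_cancel₀ (hgam i (n i - 1)).ne'
    linear_combination productWeight ξ η gamBar y n * hε y hy i j (n i) (n j) hij hi hj hni -
      ε j i (n j + 1) (n i - 1) y * hw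
  · have hw := productWeight_move_mul hgamBar ξ η y n (hne hj hk) hnj
    simp only [hj, hk, pow_one, pow_zero, mul_one] at hw
    rw [hθ y hy j k (n j) (n k) hj hk hnj, ← hw]
    ring
  · have hw := productWeight_move_mul hgamBar ξ η y n (hne hj hk).symm hnk
    simp only [hj, hk, pow_one, pow_zero, mul_one] at hw
    rw [hθ y hy j k (n j + 1) (n k - 1) hj hk (by omega), Nat.sub_add_cancel hnk,
      Nat.add_sub_cancel, hw]
    ring
  · have hgamBar_ne p m : gamBar p m ≠ 0 :=
      hgamBar p m ▸ Finset.prod_ne_zero_iff.mpr fun u _ => (hgam p u).ne'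
    exact productWeight_leap hgamBar_ne (fun k => (hξ k).ne') (fun k => (hη k).ne') y n hj.ge j'
      (h411 y hy j j' n hj hj')

/-- Theorem 4.4, simple exclusion, open-closed network, detailed
balance: under the symmetry conditions and (4.11), on `{(y,n) : |n| = N}` the
weights `w(y,n) = ∏_q [ξ_q γ̄_q(n_q)/η_q]^{y_q}` satisfy detailed balance.
Occupation configurations `y : Λ → {0,1}` are encoded as `y : Λ → ℕ` with
`∀ s, y s ≤ 1`. -/
theorem exclusion_open_closed_detailed_balance
    (Λ : Type*) [Fintype Λ] [DecidableEq Λ] [Nonempty Λ] (N : ℕ)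
    (gam : Λ → ℕ → ℝ)
    (hgam : ∀ p m, 0 < gam p m) (hgam0 : ∀ p, gam p 0 = 1)
    (gamBar : Λ → ℕ → ℝ)
    (hgamBar : ∀ p m, gamBar p m = ∏ u ∈ Finset.range m, gam p u)
    (β θ ε : Λ → Λ → ℕ → ℕ → (Λ → ℕ) → ℝ) (τ : Λ → Λ → (Λ → ℕ) → (Λ → ℕ) → ℝ)
    (hβnn : ∀ k l a b y, 0 ≤ β k l a b y) (hθnn : ∀ j k a b y, 0 ≤ θ j k a b y)
    (hεnn : ∀ i j a b y, 0 ≤ ε i j a b y) (hτnn : ∀ j j' n y, 0 ≤ τ j j' n y)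
    (ξ η : Λ → ℝ) (hξ : ∀ k, 0 < ξ k) (hη : ∀ k, 0 < η k)
    -- symmetry conditions
    (hβ : ∀ (y : Λ → ℕ), (∀ s, y s ≤ 1) → ∀ (k l : Λ) (a b : ℕ),
      k ≠ l → y k = 0 → y l = 0 → 1 ≤ a →
      β k l a b y = β l k (b + 1) (a - 1) y)
    (hθ : ∀ (y : Λ → ℕ), (∀ s, y s ≤ 1) → ∀ (j k : Λ) (a b : ℕ),
      y j = 1 → y k = 0 → 1 ≤ a →
      θ j k a b y = θ k j (b + 1) (a - 1) y)
    (hε : ∀ (y : Λ → ℕ), (∀ s, y s ≤ 1) → ∀ (i j : Λ) (a b : ℕ),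
      i ≠ j → y i = 1 → y j = 1 → 1 ≤ a →
      ε i j a b y * gam i (a - 1) = gam j b * ε j i (b + 1) (a - 1) y)
    -- (4.11)
    (h411 : ∀ (y : Λ → ℕ), (∀ s, y s ≤ 1) → ∀ (j j' : Λ) (n : Λ → ℕ),
      y j = 1 → y j' = 0 →
      τ j j' n y * ξ j / η j = τ j' j n (move y j j') * ξ j' / η j')
    (w : (Λ → ℕ) → (Λ → ℕ) → ℝ)
    (hw : ∀ (y n : Λ → ℕ), w y n =
      ∏ q, (ξ q * gamBar q (n q) / η q) ^ (y q)) :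
    ∀ (y : Λ → ℕ), (∀ s, y s ≤ 1) → ∀ n : Λ → ℕ, ∑ s, n s = N →
      -- (i) task jump between unloaded sites
      (∀ k l, y k = 0 → y l = 0 → k ≠ l → 1 ≤ n k →
        w y n * β k l (n k) (n l) y =
          w y (move n k l) * β l k (n l + 1) (n k - 1) y) ∧
      -- (ii) task jump between loaded sites
      (∀ i j, y i = 1 → y j = 1 → i ≠ j → 1 ≤ n i →
        w y n * ε i j (n i) (n j) y =
          w y (move n i j) * ε j i (n j + 1) (n i - 1) y) ∧
      -- (iii) task jump from a loaded to an unloaded site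
      (∀ j k, y j = 1 → y k = 0 → 1 ≤ n j →
        w y n * θ j k (n j) (n k) y =
          w y (move n j k) * (θ k j (n k + 1) (n j - 1) y * gam j (n j - 1))) ∧
      -- (iv) task jump from an unloaded to a loaded site
      (∀ j k, y j = 1 → y k = 0 → 1 ≤ n k →
        w y n * (θ k j (n k) (n j) y * gam j (n j)) =
          w y (move n k j) * θ j k (n j + 1) (n k - 1) y) ∧
      -- (v) leap of a distinguished customer
      (∀ j j', y j = 1 → y j' = 0 →
        w y n * (gamBar j (n j))⁻¹ * τ j j' n y =
          w (move y j j') n * (gamBar j' (n j'))⁻¹ * τ j' j n (move y j j')) ∧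
      -- (vi) arrival of a distinguished customer paired with its exit
      (∀ k, y k = 0 →
        w y n * (ξ k * gamBar k (n k)) = w (bump y k) n * η k) :=
  exclusion_open_closed_detailed_balance_general Λ N gam hgam gamBar hgamBar β θ ε τ ξ η hξ hη hβ hθ
    hε h411 w hw
end
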